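/- Let U be a finite set, let z be a nondegenerate nonnegative weight vector, let S ⊆ U be nonempty and T ⊆ U be nonempty, and suppose all points in S ∖ T have the same norm, i.e., ℓ(p) = ℓ(q) for all p, q ∈ S ∖ T. Then ∂̂f(S)/∂̂z_T ≤ 1 + H_{|S∖T|}. -/

import Mathlib

open Finset

variable {α : Type*} [Fintype α] [DecidableEq α]

/-- `E` crosses `S` if both `S ∩ E` and `S \ E` are nonempty. -/
def Crosses (E S : Finset α) : Prop := (S ∩ E).Nonempty ∧ (S \ E).Nonempty

instance (E S : Finset α) : Decidable (Crosses E S) := by unfold Crosses; infer_instance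

/-- The family of subsets of the ground set crossing `S`. -/
def crossers (S : Finset α) : Finset (Finset α) := univ.filter (fun E => Crosses E S)

/-- `ℓ(p)`: total weight of the sets containing `p`. -/
def ell (z : Finset α → ℝ) (p : α) : ℝ := ∑ E ∈ univ.filter (fun E => p ∈ E), z E

lemma card_sdiff_lt_of_mem_crossers {E S : Finset α} (h : E ∈ crossers S) :
    (S \ E).card < S.card := by
  rw [crossers, mem_filter] at h
  unfold Crosses at h
  obtain ⟨-, ⟨x, hx⟩, -⟩ := h
  refine card_lt_card ((ssubset_iff_of_subset sdiff_subset).mpr ?_)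
  exact ⟨x, (mem_inter.mp hx).1, fun hmem => (mem_sdiff.mp hmem).2 (mem_inter.mp hx).2⟩

/-- The function `f(S)` from the Closest Point Process. -/
noncomputable def fval (z : Finset α → ℝ) (S : Finset α) : ℝ :=
  if S.card ≤ 1 then ∑ p ∈ S, ell z p
  else if 0 < ∑ E ∈ crossers S, z E then
    (∑ E ∈ (crossers S).attach, z E.1 * fval z (S \ E.1)) / (∑ E ∈ crossers S, z E)
  else 0
termination_by S.card
decreasing_by exact card_sdiff_lt_of_mem_crossers E.2

/-- A weight vector is nondegenerate if every `S` with `|S| ≥ 2` has positive crossing weight. -/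
def Nondeg (z : Finset α → ℝ) : Prop :=
  ∀ S : Finset α, 2 ≤ S.card → 0 < ∑ E ∈ crossers S, z E

/-- The partial derivative `∂f(S)/∂z_T`. -/
noncomputable def pderivf (S T : Finset α) (z : Finset α → ℝ) : ℝ :=
  fderiv ℝ (fun w : Finset α → ℝ => fval w S) z (Pi.single T 1)

/-- The pseudo-derivative `∂̂f(S)/∂̂z_T`. -/
noncomputable def pdhat (z : Finset α → ℝ) (S T : Finset α) : ℝ :=
  if S ⊆ T then 1
  else if S ∩ T = ∅ then 0
  else (∑ E ∈ (crossers S).attach, z E.1 * pdhat z (S \ E.1) T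
        + fval z (S \ T) - ∑ E ∈ univ.filter (fun E => S ⊆ E), z E)
       / (∑ E ∈ crossers S, z E)
termination_by S.card
decreasing_by exact card_sdiff_lt_of_mem_crossers E.2

/-- The `m`-th harmonic number. -/
noncomputable def harm (m : ℕ) : ℝ := ∑ j ∈ Finset.range m, 1 / ((j : ℝ) + 1)
/-!
Induct on `|S|`. In the crossing case write `m = |S ∖ T|` and `k_E = |(S ∖ T) ∩ E|`. Since
`(S ∖ E) ∖ T` has `m - k_E` points, the induction hypothesis and `H_{m-k} + k/m ≤ H_m` bound the
term of `E` by `1 + H_m - k_E/m`. The deficit is repaid by the remaining terms of the numerator: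
`ℓ` is constant, say `L`, on `S ∖ T`, so `f(S ∖ T) = L`, and double counting gives
`m (L - Σ_{E ⊇ S} z_E) = Σ_{E ∈ 𝒞_S} k_E z_E`.
-/

lemma harm_nonneg (m : ℕ) : 0 ≤ harm m :=
  Finset.sum_nonneg fun _ _ => by positivity

lemma harm_sub_add_div_le_harm {m k : ℕ} (hk : k ≤ m) :
    harm (m - k) + (k : ℝ) / m ≤ harm m := by
  have hIco : harm m - harm (m - k) = ∑ j ∈ Ico (m - k) m, 1 / ((j : ℝ) + 1) :=
    (sum_Ico_eq_sub _ (Nat.sub_le m k)).symm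
  have hterm : ∀ j ∈ Ico (m - k) m, (1 : ℝ) / m ≤ 1 / ((j : ℝ) + 1) := fun j hj =>
    one_div_le_one_div_of_le (by positivity) (by exact_mod_cast (mem_Ico.mp hj).2)
  have hcard : (#(Ico (m - k) m) : ℝ) = k := by
    rw [Nat.card_Ico, Nat.sub_sub_self hk]
  have := card_nsmul_le_sum _ _ _ hterm
  rw [nsmul_eq_mul, hcard, mul_one_div] at this
  linarith

section

variable {z : Finset α → ℝ}

lemma mem_crossers {E S : Finset α} : E ∈ crossers S ↔ Crosses E S := by
  simp [crossers]

lemma fval_eq_of_two_le_card {S : Finset α} (hS : 2 ≤ #S) (hW : 0 < ∑ E ∈ crossers S, z E) :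
    fval z S = (∑ E ∈ crossers S, z E * fval z (S \ E)) / ∑ E ∈ crossers S, z E := by
  rw [fval, if_neg (by omega), if_pos hW,
    sum_attach (crossers S) fun E => z E * fval z (S \ E)]

lemma pdhat_eq_of_crosses {S T : Finset α} (hST : ¬S ⊆ T) (hinter : (S ∩ T).Nonempty) :
    pdhat z S T = (∑ E ∈ crossers S, z E * pdhat z (S \ E) T + fval z (S \ T)
      - ∑ E ∈ univ.filter (S ⊆ ·), z E) / ∑ E ∈ crossers S, z E := by
  rw [pdhat, if_neg hST, if_neg hinter.ne_empty,
    sum_attach (crossers S) fun E => z E * pdhat z (S \ E) T]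

theorem fval_eq_of_forall_ell_eq (hnd : Nondeg z) {S : Finset α} (hS : S.Nonempty) {L : ℝ}
    (hL : ∀ p ∈ S, ell z p = L) : fval z S = L := by
  by_cases h1 : #S ≤ 1
  · obtain ⟨p, rfl⟩ := card_eq_one.mp (le_antisymm h1 (card_pos.mpr hS))
    rw [fval, if_pos h1, sum_singleton, hL p (mem_singleton_self p)]
  have hW := hnd S (by omega)
  have hterm : ∀ E ∈ crossers S, z E * fval z (S \ E) = z E * L := fun E hE => by
    have := card_sdiff_lt_of_mem_crossers hE
    rw [fval_eq_of_forall_ell_eq hnd (mem_crossers.mp hE).2 fun p hp => hL p (mem_sdiff.mp hp).1]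
  rw [fval_eq_of_two_le_card (by omega) hW, sum_congr rfl hterm, ← sum_mul,
    mul_div_cancel_left₀ L hW.ne']
termination_by #S

/-- A set containing a point of `S` either crosses `S` or contains all of `S`. -/
lemma ell_eq_sum_crossers_add {S : Finset α} {p : α} (hp : p ∈ S) :
    ell z p = (∑ E ∈ crossers S, if p ∈ E then z E else 0) + ∑ E ∈ univ.filter (S ⊆ ·), z E := by
  rw [ell, sum_filter, crossers, sum_filter, sum_filter, ← sum_add_distrib]
  refine sum_congr rfl fun E _ => ?_
  by_cases hSE : S ⊆ E
  · have hnc : ¬Crosses E S := fun ⟨_, x, hx⟩ =>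
      (mem_sdiff.mp hx).2 (hSE (mem_sdiff.mp hx).1)
    simp [hSE hp, hnc, hSE]
  · by_cases hpE : p ∈ E
    · have hc : Crosses E S := ⟨⟨p, mem_inter.mpr ⟨hp, hpE⟩⟩, sdiff_nonempty.mpr hSE⟩
      simp [hpE, hc, hSE]
    · simp [hpE, hSE]

lemma sum_ell_eq {A S : Finset α} (hAS : A ⊆ S) :
    ∑ p ∈ A, ell z p = ∑ E ∈ crossers S, (#(A ∩ E) : ℝ) * z E
      + #A * ∑ E ∈ univ.filter (S ⊆ ·), z E := by
  rw [sum_congr rfl fun p hp => ell_eq_sum_crossers_add (z := z) (hAS hp), sum_add_distrib,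
    sum_const, nsmul_eq_mul, sum_comm]
  congr 1
  refine sum_congr rfl fun E _ => ?_
  rw [← sum_filter, filter_mem_eq_inter, sum_const, nsmul_eq_mul]

lemma ell_sub_sum_superset_eq {A S : Finset α} (hAS : A ⊆ S) (hA : (0 : ℝ) < #A) {L : ℝ}
    (hL : ∀ p ∈ A, ell z p = L) :
    L - ∑ E ∈ univ.filter (S ⊆ ·), z E = (∑ E ∈ crossers S, (#(A ∩ E) : ℝ) * z E) / #A := by
  have := sum_ell_eq (z := z) hAS
  rw [sum_congr rfl hL, sum_const, nsmul_eq_mul] at this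
  rw [eq_div_iff hA.ne']
  linarith

theorem pdhat_le_one_add_harm (hz : ∀ E, 0 ≤ z E) (hnd : Nondeg z) (S T : Finset α)
    (huni : ∀ p ∈ S \ T, ∀ q ∈ S \ T, ell z p = ell z q) :
    pdhat z S T ≤ 1 + harm #(S \ T) := by
  have h1 : ∀ x, 1 ≤ 1 + harm x := fun x => le_add_of_nonneg_right (harm_nonneg x)
  by_cases hST : S ⊆ T
  · rw [pdhat, if_pos hST]; exact h1 _
  obtain ⟨y, hy⟩ := sdiff_nonempty.mpr hST
  by_cases hinter : (S ∩ T).Nonempty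
  swap
  · rw [pdhat, if_neg hST, if_pos (not_nonempty_iff_eq_empty.mp hinter)]
    linarith [h1 #(S \ T)]
  obtain ⟨x, hx⟩ := hinter
  have hW := hnd S (one_lt_card.mpr ⟨x, (mem_inter.mp hx).1, y, (mem_sdiff.mp hy).1,
    fun hxy => (mem_sdiff.mp hy).2 (hxy ▸ (mem_inter.mp hx).2)⟩)
  set m := #(S \ T)
  set W := ∑ E ∈ crossers S, z E
  set B := ∑ E ∈ univ.filter (S ⊆ ·), z E
  set k : Finset α → ℝ := fun E => #((S \ T) ∩ E)
  have hm : (0 : ℝ) < m := by exact_mod_cast card_pos.mpr ⟨y, hy⟩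
  have hL : ∀ p ∈ S \ T, ell z p = ell z y := fun p hp => huni p hp y hy
  have hfL : fval z (S \ T) = ell z y := fval_eq_of_forall_ell_eq hnd ⟨y, hy⟩ hL
  have hrepay : ell z y - B = (∑ E ∈ crossers S, k E * z E) / m :=
    ell_sub_sum_superset_eq sdiff_subset hm hL
  have hterm : ∀ E ∈ crossers S, z E * pdhat z (S \ E) T ≤ z E * (1 + harm m - k E / m) := by
    intro E hE
    have := card_sdiff_lt_of_mem_crossers hE
    have hsub : (S \ E) \ T = (S \ T) \ E := by ext; simp only [mem_sdiff]; tauto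
    have hk : #((S \ T) ∩ E) ≤ m := card_le_card inter_subset_left
    have hcard : #((S \ E) \ T) = m - #((S \ T) ∩ E) := by
      rw [hsub, card_sdiff, inter_comm]
    have ih := pdhat_le_one_add_harm hz hnd (S \ E) T fun p hp q hq =>
      huni p (mem_sdiff.mp (hsub ▸ hp)).1 q (mem_sdiff.mp (hsub ▸ hq)).1
    rw [hcard] at ih
    have := harm_sub_add_div_le_harm hk
    exact mul_le_mul_of_nonneg_left (by linarith) (hz E)
  have hsum : ∑ E ∈ crossers S, z E * (1 + harm m - k E / m)
      = (1 + harm m) * W - (∑ E ∈ crossers S, k E * z E) / m := by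
    rw [mul_sum, sum_div, ← sum_sub_distrib]
    exact sum_congr rfl fun E _ => by ring
  rw [pdhat_eq_of_crosses hST ⟨x, hx⟩, hfL, div_le_iff₀ hW]
  linarith [sum_le_sum hterm]
termination_by #S

end

theorem stmt9_general {α : Type*} [Fintype α] [DecidableEq α]
    (z : Finset α → ℝ) (hz : ∀ E : Finset α, 0 ≤ z E) (hnd : Nondeg z)
    (S T : Finset α)
    (huni : ∀ p ∈ S \ T, ∀ q ∈ S \ T, ell z p = ell z q) :
    pdhat z S T ≤ 1 + harm (S \ T).card :=
  pdhat_le_one_add_harm hz hnd S T huni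

/-- the uniform case — if all points of `S ∖ T` have the same norm,
then the pseudo-derivative is at most `1 + H_{|S∖T|}`. -/
theorem stmt9 {α : Type*} [Fintype α] [DecidableEq α]
    (z : Finset α → ℝ) (hz : ∀ E : Finset α, 0 ≤ z E) (hnd : Nondeg z)
    (S T : Finset α) (hS : S.Nonempty) (hT : T.Nonempty)
    (huni : ∀ p ∈ S \ T, ∀ q ∈ S \ T, ell z p = ell z q) :
    pdhat z S T ≤ 1 + harm (S \ T).card :=
  stmt9_general z hz hnd S T huni
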